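/- arXiv:2105.07670 — 5 statements merged into one kernel-verified Lean document; each statement's English description precedes it below -/
import Mathlib

section
/- Let F ∈ L[X] be a polynomial of degree at most d ≥ 1, let A ≤ B be integers, D = B − A, M = max{|A|, |B|}, and let x_1, …, x_{d+1} be distinct integers in [A, B]. Then for every finite place v of L one has |F|_v ≤ |1/D!|_v · max{|F(x_1)|_v, …, |F(x_{d+1})|_v}, and for every infinite place v of L one has |F|_v ≤ (d+1)·(2M)^d · max{|F(x_1)|_v, …, |F(x_{d+1})|_v}. -/
open NumberField Polynomial IsDedekindDomain Nat
open scoped Classical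

/-- The integer-valued `𝔭`-adic valuation on a number field `L`, normalized so that a
uniformizer has valuation `1` (with the junk value `0` at `x = 0`). -/
noncomputable def intValOn {L : Type*} [Field L] [NumberField L]
    (v : HeightOneSpectrum (𝓞 L)) (x : L) : ℤ :=
  if h : x = 0 then 0
  else -Multiplicative.toAdd (WithZero.unzero ((v.valuation L).ne_zero_iff.mpr h))

/-- The normalized `𝔭`-adic absolute value `‖x‖_𝔭 = (N𝔭)^{-v_𝔭(x)}`, i.e. the `d_v`-th power
`|x|_v^{d_v}` of the absolute value `|·|_v` normalized by `|p|_v = 1/p`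
(where `d_v = [L_v : ℚ_p]` is the local degree); thus for every `x ∈ L`,
`log (finAbs v x) = d_v · log |x|_v`. -/
noncomputable def finAbs {L : Type*} [Field L] [NumberField L]
    (v : HeightOneSpectrum (𝓞 L)) (x : L) : ℝ :=
  if x = 0 then 0 else (Ideal.absNorm v.asIdeal : ℝ) ^ (-(intValOn v x))

/-- `|P|_v = max_i |a_i|_v` for `P = Σ_i a_i X^i` and `v` an absolute value on `L`. -/
noncomputable def polyNorm {L : Type*} [Field L] (v : L → ℝ) (P : L[X]) : ℝ :=
  ⨆ i, v (P.coeff i)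

/-- The absolute logarithmic Weil height `h(x) = Σ_v (d_v/d_L) log max{1, |x|_v}` of `x ∈ L`:
the finite-place part is written using `finAbs` (recall `log (finAbs v x) = d_v log |x|_v`),
and for an infinite place `v`, `d_v` is `InfinitePlace.mult v`. -/
noncomputable def elemHeight {L : Type*} [Field L] [NumberField L] (x : L) : ℝ :=
  (1 / (Module.finrank ℚ L : ℝ)) *
    ((∑ᶠ v : HeightOneSpectrum (𝓞 L), Real.log (max 1 (finAbs v x))) +
      ∑ v : InfinitePlace L, (v.mult : ℝ) * Real.log (max 1 (v x)))

/-- The height `h(P) = Σ_v (d_v/d_L) log max{1, |P|_v}` of a polynomial `P ∈ L[X]`. -/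
noncomputable def polyHeight {L : Type*} [Field L] [NumberField L] (P : L[X]) : ℝ :=
  (1 / (Module.finrank ℚ L : ℝ)) *
    ((∑ᶠ v : HeightOneSpectrum (𝓞 L), Real.log (max 1 (polyNorm (finAbs v) P))) +
      ∑ v : InfinitePlace L, (v.mult : ℝ) * Real.log (max 1 (polyNorm (⇑v) P)))

/-- The projective height `Σ_v (d_v/d_L) log max_c |c|_v` of the coefficient tuple of a pair of
polynomials `(P, Q)` (not both zero); for `P, Q` coprime with `F = P/Q` this is the height
`h(F)` of the rational fraction `F`, independent of the chosen representation. -/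
noncomputable def pairHeight {L : Type*} [Field L] [NumberField L] (P Q : L[X]) : ℝ :=
  (1 / (Module.finrank ℚ L : ℝ)) *
    ((∑ᶠ v : HeightOneSpectrum (𝓞 L),
        Real.log (max (polyNorm (finAbs v) P) (polyNorm (finAbs v) Q))) +
      ∑ v : InfinitePlace L, (v.mult : ℝ) *
        Real.log (max (polyNorm (⇑v) P) (polyNorm (⇑v) Q)))

/-- `h°(x) = (1/d_L) log |N_{L/ℚ}(x)|` for a nonzero algebraic integer `x`. -/
noncomputable def normHeight {L : Type*} [Field L] [NumberField L] (x : 𝓞 L) : ℝ :=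
  (1 / (Module.finrank ℚ L : ℝ)) * Real.log |(Algebra.norm ℤ x : ℝ)|

/-!
Lagrange interpolation at the nodes `x i` writes the `k`-th coefficient of `F` as
`∑ i, F (x i) * c i k / ∏ j ≠ i, (x i - x j)`, where the `c i k` are the integer coefficients
of `∏ j ≠ i, (X - x j)`. At a finite place every denominator divides `D!`, because the distances
from `x i` to the nodes below (resp. above) it are distinct integers in `[1, x i - A]`
(resp. `[1, B - x i]`); as integers have absolute value `≤ 1`, the ultrametric inequality gives
the bound. At an infinite place the denominators are nonzero integers, hence of absolute value
`≥ 1`, and `|c i k| ≤ ∏ j ≠ i, (1 + |x j|) ≤ (2M)^d`.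
-/

open Finset Lagrange

namespace Lagrange

variable {K : Type*} [Field K] {ι : Type*} {s : Finset ι}

theorem nodal_intCast (x : ι → ℤ) :
    nodal s (fun j => (x j : K)) = (nodal s x).map (Int.castRingHom K) := by
  simp [nodal, Polynomial.map_prod]

variable [DecidableEq ι]

theorem coeff_eq_sum_nodalWeight_mul {v : ι → K} (hvs : Set.InjOn v s) {F : K[X]}
    (hdeg : F.degree < s.card) (k : ℕ) :
    F.coeff k = ∑ i ∈ s, F.eval (v i) * nodalWeight s v i * (nodal (s.erase i) v).coeff k := by
  conv_lhs => rw [eq_interpolate hvs hdeg, interpolate_apply, finsetSum_coeff]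
  refine sum_congr rfl fun i hi => ?_
  rw [basis_eq_prod_sub_inv_mul_nodal_div hi, ← nodal_erase_eq_nodal_div hi, coeff_C_mul,
    coeff_C_mul, mul_assoc]

theorem nodalWeight_intCast (x : ι → ℤ) (i : ι) :
    nodalWeight s (fun j => (x j : K)) i = ((∏ j ∈ s.erase i, (x i - x j) : ℤ) : K)⁻¹ := by
  simp [nodalWeight, prod_inv_distrib]

end Lagrange

theorem AbsoluteValue.coeff_nodal_le {R S : Type*} [CommRing R] [Nontrivial R] [CommRing S]
    [LinearOrder S] [IsStrictOrderedRing S] (w : AbsoluteValue R S) {ι : Type*} (s : Finset ι)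
    (v : ι → R) (k : ℕ) : w ((nodal s v).coeff k) ≤ ∏ i ∈ s, (1 + w (v i)) := by
  classical
  induction s using Finset.induction_on generalizing k with
  | empty => rcases k with _ | k <;> simp [coeff_one]
  | insert a s ha ih =>
    rw [nodal_insert_eq_nodal ha, prod_insert ha, sub_mul, coeff_sub, coeff_C_mul]
    have hX : w ((X * nodal s v).coeff k) ≤ ∏ i ∈ s, (1 + w (v i)) := by
      rcases k with _ | k
      · simpa using prod_nonneg fun i _ => add_nonneg zero_le_one (w.nonneg (v i))
      · rw [coeff_X_mul]; exact ih k
    calc _ ≤ w ((X * nodal s v).coeff k) + w (v a) * w ((nodal s v).coeff k) := by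
          rw [← map_mul]; exact w.sub_le_add _ _
      _ ≤ _ := by grw [hX, ih k]; linarith

theorem Nat.prod_dvd_factorial_of_injOn {ι : Type*} {s : Finset ι} {f : ι → ℕ} {r : ℕ}
    (hf : Set.InjOn f s) (hmem : ∀ i ∈ s, f i ∈ Icc 1 r) : ∏ i ∈ s, f i ∣ r ! := by
  classical
  calc ∏ i ∈ s, f i = ∏ m ∈ s.image f, m := (prod_image (f := fun m => m) hf).symm
    _ ∣ ∏ m ∈ Icc 1 r, m := prod_dvd_prod_of_subset _ _ _ fun m hm => by
        obtain ⟨i, hi, rfl⟩ := mem_image.mp hm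
        exact hmem i hi
    _ = r ! := by rw [← Ico_add_one_right_eq_Icc, prod_Ico_id_eq_factorial]

theorem Int.prod_sub_dvd_factorial {ι : Type*} [DecidableEq ι] {s : Finset ι} {x : ι → ℤ}
    (hx : Set.InjOn x s) {A B : ℤ} {D : ℕ} (hD : (D : ℤ) = B - A)
    (hmem : ∀ j ∈ s, x j ∈ Set.Icc A B) {i : ι} (hi : i ∈ s) :
    ∏ j ∈ s.erase i, (x i - x j) ∣ (D ! : ℤ) := by
  obtain ⟨hAi, hiB⟩ := hmem i hi
  have hmem' (j : ι) (hj : j ∈ s.erase i) : A ≤ x j ∧ x j ≤ B ∧ x j ≠ x i :=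
    ⟨(hmem j (mem_of_mem_erase hj)).1, (hmem j (mem_of_mem_erase hj)).2,
      hx.ne (mem_of_mem_erase hj) hi (ne_of_mem_erase hj)⟩
  have hinj (j k : ι) (hj : j ∈ s.erase i) (hk : k ∈ s.erase i) (h : x j = x k) : j = k :=
    hx (mem_of_mem_erase hj) (mem_of_mem_erase hk) h
  rw [← Int.natAbs_dvd_natAbs, Int.natAbs_natCast,
    show (∏ j ∈ s.erase i, (x i - x j)).natAbs = ∏ j ∈ s.erase i, (x i - x j).natAbs from
      map_prod Int.natAbsHom _ _,
    ← prod_filter_mul_prod_filter_not (s.erase i) (fun j => x j < x i)]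
  have hbelow : ∏ j ∈ (s.erase i).filter (x · < x i), (x i - x j).natAbs
      ∣ (x i - A).toNat ! := by
    refine Nat.prod_dvd_factorial_of_injOn (fun j hj k hk hjk => ?_) fun j hj => ?_
    · rw [mem_coe, mem_filter] at hj hk
      exact hinj j k hj.1 hk.1 (by omega)
    · rw [mem_filter] at hj
      have := hmem' j hj.1
      rw [mem_Icc]; omega
  have habove : ∏ j ∈ (s.erase i).filter (¬ x · < x i), (x i - x j).natAbs
      ∣ (B - x i).toNat ! := by
    refine Nat.prod_dvd_factorial_of_injOn (fun j hj k hk hjk => ?_) fun j hj => ?_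
    · rw [mem_coe, mem_filter] at hj hk
      have := hmem' j hj.1; have := hmem' k hk.1
      exact hinj j k hj.1 hk.1 (by omega)
    · rw [mem_filter] at hj
      have := hmem' j hj.1
      rw [mem_Icc]; omega
  have hD' : D = (x i - A).toNat + (B - x i).toNat := by omega
  exact hD' ▸ (mul_dvd_mul hbelow habove).trans
    (Nat.factorial_mul_factorial_dvd_factorial_add _ _)

theorem finAbs_eq_adicAbv {L : Type*} [Field L] [NumberField L] (v : HeightOneSpectrum (𝓞 L)) :
    finAbs v = NumberField.HeightOneSpectrum.adicAbv L v := by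
  ext x
  by_cases hx : x = 0
  · simp [finAbs, hx]
  · rw [finAbs, if_neg hx, NumberField.HeightOneSpectrum.adicAbv_def,
      WithZeroMulInt.toNNReal_neg_apply _ ((v.valuation L).ne_zero_iff.mpr hx), intValOn,
      dif_neg hx, neg_neg, NNReal.coe_zpow, NNReal.coe_natCast]

namespace Polynomial

variable {K : Type*} [Field K] [CharZero K] {ι : Type*} [DecidableEq ι] {s : Finset ι}
  {x : ι → ℤ} {F : K[X]}

theorem exists_abv_coeff_le_of_isNonarchimedean {w : AbsoluteValue K ℝ} (hw : IsNonarchimedean w)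
    (hx : Set.InjOn x s) (hs : s.Nonempty) (hdeg : F.degree < s.card) {N : ℤ} (hN : N ≠ 0)
    (hdvd : ∀ i ∈ s, ∏ j ∈ s.erase i, (x i - x j) ∣ N) (k : ℕ) :
    ∃ i ∈ s, w (F.coeff k) ≤ w (N : K)⁻¹ * w (F.eval (x i : K)) := by
  have hxK : Set.InjOn (fun j => (x j : K)) s := fun i hi j hj h => hx hi hj (Int.cast_injective h)
  rw [coeff_eq_sum_nodalWeight_mul hxK hdeg]
  obtain ⟨i, hi, hle⟩ := hw.finset_image_add_of_nonempty _ hs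
  refine ⟨i, hi, hle.trans ?_⟩
  obtain ⟨q, hq⟩ := hdvd i hi
  have hw_nodal : w ((nodal (s.erase i) fun j => (x j : K)).coeff k) ≤ 1 := by
    rw [nodal_intCast, coeff_map, eq_intCast]
    exact hw.apply_intCast_le_one
  have hw_weight : w (nodalWeight s (fun j => (x j : K)) i) ≤ w (N : K)⁻¹ := by
    have hpos : 0 < w (N : K) := w.pos (Int.cast_ne_zero.mpr hN)
    rw [nodalWeight_intCast, map_inv₀, map_inv₀]
    rw [hq, Int.cast_mul, map_mul] at hpos ⊢
    exact inv_anti₀ hpos (mul_le_of_le_one_right (w.nonneg _) hw.apply_intCast_le_one)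
  rw [map_mul, map_mul, mul_assoc, mul_comm]
  gcongr
  simpa using mul_le_mul hw_weight hw_nodal (by positivity) (by positivity)

theorem abv_coeff_le_of_abv_eval_le {w : AbsoluteValue K ℝ} (hw : ∀ n : ℤ, w n = |(n : ℝ)|)
    (hx : Set.InjOn x s) (hdeg : F.degree < s.card) {M : ℤ} (hM : ∀ i ∈ s, |x i| ≤ M)
    {S : ℝ} (hS : ∀ i ∈ s, w (F.eval (x i : K)) ≤ S) (k : ℕ) :
    w (F.coeff k) ≤ s.card * (2 * M) ^ (s.card - 1) * S := by
  have hxK : Set.InjOn (fun j => (x j : K)) s := fun i hi j hj h => hx hi hj (Int.cast_injective h)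
  rw [coeff_eq_sum_nodalWeight_mul hxK hdeg]
  refine (w.sum_le _ _).trans ?_
  calc ∑ i ∈ s, w _ ≤ ∑ i ∈ s, S * (2 * M) ^ (s.card - 1) := sum_le_sum fun i hi => ?_
    _ = _ := by rw [sum_const, nsmul_eq_mul]; ring
  have hw_weight : w (nodalWeight s (fun j => (x j : K)) i) ≤ 1 := by
    have hprod : ∏ j ∈ s.erase i, (x i - x j) ≠ 0 := prod_ne_zero_iff.mpr fun j hj =>
      sub_ne_zero.mpr fun h => ne_of_mem_erase hj (hx (mem_of_mem_erase hj) hi h.symm)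
    rw [nodalWeight_intCast, map_inv₀, hw, ← Int.cast_abs]
    exact inv_le_one_of_one_le₀ (by exact_mod_cast Int.one_le_abs hprod)
  have hw_nodal :
      w ((nodal (s.erase i) fun j => (x j : K)).coeff k) ≤ (2 * M) ^ (s.card - 1) := by
    refine (w.coeff_nodal_le _ _ k).trans ?_
    rw [← card_erase_of_mem hi, ← prod_const]
    refine prod_le_prod (fun j _ => by positivity) fun j hj => ?_
    have hM1 : 1 ≤ M := by
      have := abs_le.mp (hM i hi); have := abs_le.mp (hM j (mem_of_mem_erase hj))
      have := hx.ne (mem_of_mem_erase hj) hi (ne_of_mem_erase hj)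
      omega
    rw [hw, ← Int.cast_abs]
    exact_mod_cast (by linarith [hM j (mem_of_mem_erase hj)] : 1 + |x j| ≤ 2 * M)
  rw [map_mul, map_mul, mul_assoc]
  exact mul_le_mul (hS i hi)
    (by simpa using mul_le_mul hw_weight hw_nodal (by positivity) zero_le_one)
    (by positivity) ((w.nonneg _).trans (hS i hi))

end Polynomial

theorem stmt_1_general {L : Type*} [Field L] [NumberField L]
    (d : ℕ) (F : L[X]) (hdeg : F.natDegree ≤ d)
    (A B : ℤ) (D : ℕ) (hD : (D : ℤ) = B - A) (M : ℤ) (hM : M = max |A| |B|)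
    (x : Fin (d + 1) → ℤ) (hinj : Function.Injective x) (hx : ∀ i, x i ∈ Set.Icc A B) :
    (∀ v : HeightOneSpectrum (𝓞 L),
      polyNorm (finAbs v) F ≤
        finAbs v ((D ! : L)⁻¹) * ⨆ i, finAbs v (F.eval ((x i : ℤ) : L))) ∧
    (∀ v : InfinitePlace L,
      polyNorm (⇑v) F ≤
        ((d : ℝ) + 1) * (2 * (M : ℝ)) ^ d * ⨆ i, v (F.eval ((x i : ℤ) : L))) := by
  have hxs : Set.InjOn x (univ : Finset (Fin (d + 1))) := hinj.injOn
  have hdegs : F.degree < (univ : Finset (Fin (d + 1))).card := by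
    rw [Finset.card_univ, Fintype.card_fin]
    exact degree_le_natDegree.trans_lt (by exact_mod_cast Nat.lt_succ_of_le hdeg)
  have le_iSup_eval (w : L → ℝ) (i : Fin (d + 1)) :
      w (F.eval (x i : L)) ≤ ⨆ i, w (F.eval (x i : L)) :=
    le_ciSup (f := fun i => w (F.eval (x i : L))) (Set.finite_range _).bddAbove i
  refine ⟨fun v => ciSup_le fun k => ?_, fun v => ciSup_le fun k => ?_⟩
  · obtain ⟨i, -, hi⟩ := exists_abv_coeff_le_of_isNonarchimedean
      (NumberField.HeightOneSpectrum.isNonarchimedean_adicAbv L v) hxs univ_nonempty hdegs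
      (N := D !) (by positivity)
      (fun i _ => Int.prod_sub_dvd_factorial hxs hD (fun j _ => hx j) (mem_univ i)) k
    rw [Int.cast_natCast] at hi
    rw [finAbs_eq_adicAbv]
    exact hi.trans (by gcongr; exact le_iSup_eval _ i)
  · have hMx : ∀ i ∈ (univ : Finset (Fin (d + 1))), |x i| ≤ M := fun i _ =>
      hM ▸ abs_le_max_abs_abs (hx i).1 (hx i).2
    have hv_int (n : ℤ) : v.1 n = |(n : ℝ)| := by
      rw [← InfinitePlace.coe_apply, v.map_intCast, Int.norm_eq_abs]
    simpa [← InfinitePlace.coe_apply] using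
      abv_coeff_le_of_abv_eval_le hv_int hxs hdegs hMx (fun i _ => le_iSup_eval _ i) k

/-- Let `F ∈ L[X]` of degree at most `d ≥ 1` and let `x 0, …, x d` be distinct
integers in `[A, B]`, `D = B − A`, `M = max{|A|, |B|}`. Then for every finite place `v`,
`|F|_v ≤ |1/D!|_v · max_i |F(x_i)|_v` (stated, equivalently, after raising both sides of the
inequality to the local degree `d_v`, i.e. using the normalization `finAbs`), and for every
infinite place `v`, `|F|_v ≤ (d+1)·(2M)^d · max_i |F(x_i)|_v`. -/
theorem stmt_1 {L : Type*} [Field L] [NumberField L]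
    (d : ℕ) (hd : 1 ≤ d) (F : L[X]) (hdeg : F.natDegree ≤ d)
    (A B : ℤ) (hAB : A ≤ B) (D : ℕ) (hD : (D : ℤ) = B - A) (M : ℤ) (hM : M = max |A| |B|)
    (x : Fin (d + 1) → ℤ) (hinj : Function.Injective x) (hx : ∀ i, x i ∈ Set.Icc A B) :
    (∀ v : HeightOneSpectrum (𝓞 L),
      polyNorm (finAbs v) F ≤
        finAbs v ((D ! : L)⁻¹) * ⨆ i, finAbs v (F.eval ((x i : ℤ) : L))) ∧
    (∀ v : InfinitePlace L,
      polyNorm (⇑v) F ≤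
        ((d : ℝ) + 1) * (2 * (M : ℝ)) ^ d * ⨆ i, v (F.eval ((x i : ℤ) : L))) :=
  stmt_1_general d F hdeg A B D hD M hM x hinj hx
end

section
/- Let F ∈ L[X] be a polynomial of degree at most d ≥ 1, let A ≤ B be integers with D = B − A and M = max{|A|, |B|}, let N ≥ d+1, and let x_1, …, x_N be distinct integers in [A, B]. Then for every infinite place v of L one has log max{1, |F|_v} ≤ d·log(2M) + log(d+1) + (1/(N−d)) · Σ_{i=1}^N log max{1, |F(x_i)|_v}. -/
open NumberField Polynomial IsDedekindDomain Nat
open scoped Classical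

/-! Put `a_i = log max{1, |F(x_i)|_v} ≥ 0` and `t = (Σ a_i) / (N - d)`. At least `d + 1` of the
`a_i` are at most `t`, since otherwise the `N - d` or more remaining ones would already sum to
more than `(N - d) t`.
Lagrange interpolation at those `d + 1` integer nodes writes `F` as a combination of values of
size at most `e^t` with basis polynomials whose coefficients are at most `(2M)^d`, because each
factor `(X - x_k) / (x_j - x_k)` has integer nodes bounded by `M` and denominator at least `1`. -/

open Finset

theorem lt_card_filter_le_of_sum_le {ι : Type*} [Fintype ι] {a : ι → ℝ} (ha : ∀ i, 0 ≤ a i)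
    {d : ℕ} (hd : d < Fintype.card ι) {t : ℝ}
    (hsum : ∑ i, a i ≤ (Fintype.card ι - d) * t) : d < #{i | a i ≤ t} := by
  have hcard : (0 : ℝ) < Fintype.card ι - d := sub_pos.mpr (by exact_mod_cast hd)
  have ht : 0 ≤ t := nonneg_of_mul_nonneg_right
    ((sum_nonneg fun i _ => ha i).trans hsum) hcard
  by_contra! hsmall
  have hsplit := card_filter_add_card_filter_not (s := univ) (fun i => a i ≤ t)
  rw [Finset.card_univ] at hsplit
  set large : Finset ι := {i | ¬a i ≤ t}
  have hlarge : (Fintype.card ι : ℝ) - d ≤ #large := by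
    have : (Fintype.card ι : ℝ) = #{i | a i ≤ t} + #large := by exact_mod_cast hsplit.symm
    have : (#{i | a i ≤ t} : ℝ) ≤ d := by exact_mod_cast hsmall
    linarith
  have hne : large.Nonempty := card_pos.mp (by exact_mod_cast hcard.trans_le hlarge)
  have : #large * t < ∑ i ∈ large, a i := by
    simpa [mul_comm] using sum_lt_sum_of_nonempty hne
      (fun i hi => lt_of_not_ge (mem_filter.mp hi).2 : ∀ i ∈ large, t < a i)
  have : ∑ i ∈ large, a i ≤ ∑ i, a i :=
    sum_le_sum_of_subset_of_nonneg (subset_univ _) fun i _ _ => ha i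
  linarith [mul_le_mul_of_nonneg_right hlarge ht]

section AbsoluteValue

variable {K : Type*} [Field K] (w : AbsoluteValue K ℝ)

theorem AbsoluteValue.coeff_X_sub_C_mul_le {P : K[X]} {c : ℝ} (hP : ∀ i, w (P.coeff i) ≤ c)
    (b : K) (i : ℕ) : w (((X - C b) * P).coeff i) ≤ (1 + w b) * c := by
  have hX : w ((X * P).coeff i) ≤ c := by
    cases i with
    | zero => simpa using (w.nonneg _).trans (hP 0)
    | succ n => simpa only [coeff_X_mul] using hP n
  calc w (((X - C b) * P).coeff i) ≤ w ((X * P).coeff i) + w b * w (P.coeff i) := by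
        rw [sub_mul, coeff_sub, coeff_C_mul, ← map_mul]
        exact w.sub_le_add _ _
    _ ≤ c + w b * c := by gcongr; exact hP i
    _ = (1 + w b) * c := by ring

theorem AbsoluteValue.coeff_prod_basisDivisor_le {ι : Type*} (s : Finset ι) (a : K)
    (b : ι → K) (i : ℕ) :
    w ((∏ k ∈ s, Lagrange.basisDivisor a (b k)).coeff i) ≤
      ∏ k ∈ s, w (a - b k)⁻¹ * (1 + w (b k)) := by
  classical
  induction s using Finset.induction_on generalizing i with
  | empty => cases i <;> simp [coeff_one]
  | insert k s hk ih =>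
    rw [prod_insert hk, prod_insert hk, Lagrange.basisDivisor, mul_assoc, coeff_C_mul, map_mul,
      mul_assoc]
    gcongr
    exact w.coeff_X_sub_C_mul_le ih _ _

end AbsoluteValue

theorem Int.one_le_of_ne_of_abs_le {a b M : ℤ} (hab : a ≠ b) (ha : |a| ≤ M) (hb : |b| ≤ M) :
    1 ≤ M := by
  rw [abs_le] at ha hb
  omega

namespace NumberField.InfinitePlace

variable {K : Type*} [Field K] (v : InfinitePlace K)

theorem inv_sub_intCast_mul_le {a b M : ℤ} (hab : a ≠ b) (ha : |a| ≤ M) (hb : |b| ≤ M) :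
    v ((a : K) - b)⁻¹ * (1 + v (b : K)) ≤ 2 * M := by
  have hM : (1 : ℝ) ≤ M := by exact_mod_cast Int.one_le_of_ne_of_abs_le hab ha hb
  have hsub : 1 ≤ v ((a : K) - b) := by
    rw [← Int.cast_sub, InfinitePlace.map_intCast, Int.norm_eq_abs]
    exact_mod_cast Int.one_le_abs (sub_ne_zero.mpr hab)
  have hb' : v (b : K) ≤ M := by
    rw [InfinitePlace.map_intCast, Int.norm_eq_abs]
    exact_mod_cast hb
  calc v ((a : K) - b)⁻¹ * (1 + v (b : K)) ≤ 1 * (1 + M) := by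
        rw [map_inv₀]
        gcongr
        exact inv_le_one_of_one_le₀ hsub
    _ ≤ 2 * M := by linarith

variable {ι : Type*} [DecidableEq ι] {s : Finset ι} {x : ι → ℤ} {M : ℤ}

theorem coeff_basis_intCast_le (hx : Set.InjOn x s) (hM : ∀ k ∈ s, |x k| ≤ M) {j : ι}
    (hj : j ∈ s) (i : ℕ) :
    v ((Lagrange.basis s (fun k => (x k : K)) j).coeff i) ≤ (2 * M) ^ (#s - 1) := by
  refine (v.1.coeff_prod_basisDivisor_le _ _ _ i).trans ?_
  rw [← card_erase_of_mem hj, ← prod_const]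
  refine prod_le_prod (fun k _ => by positivity) fun k hk => ?_
  have hjk : x j ≠ x k := fun h => (ne_of_mem_erase hk) (hx (mem_of_mem_erase hk) hj h.symm)
  exact v.inv_sub_intCast_mul_le hjk (hM j hj) (hM k (mem_of_mem_erase hk))

theorem coeff_le_of_eval_intCast_le [CharZero K] {P : K[X]} (hx : Set.InjOn x s)
    (hdeg : P.degree < #s) (hM : ∀ k ∈ s, |x k| ≤ M) {c : ℝ}
    (hc : ∀ j ∈ s, v (P.eval (x j : K)) ≤ c) (i : ℕ) :
    v (P.coeff i) ≤ #s * (2 * M) ^ (#s - 1) * c := by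
  have hxK : Set.InjOn (fun k => (x k : K)) s := Int.cast_injective.comp_injOn hx
  rw [Lagrange.eq_interpolate hxK hdeg, Lagrange.interpolate_apply, finsetSum_coeff]
  refine (v.1.sum_le _ _).trans ?_
  refine (sum_le_card_nsmul _ _ (c * (2 * M) ^ (#s - 1)) fun j hj => ?_).trans_eq
    (by rw [nsmul_eq_mul]; ring)
  rw [coeff_C_mul, map_mul]
  exact mul_le_mul (hc j hj) (v.coeff_basis_intCast_le hx hM hj i) (by positivity)
    ((by positivity : (0 : ℝ) ≤ v _).trans (hc j hj))

end NumberField.InfinitePlace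

theorem stmt_5_general {L : Type*} [Field L] [NumberField L]
    (d : ℕ) (hd : 1 ≤ d) (F : L[X]) (hdeg : F.natDegree ≤ d)
    (A B : ℤ) (M : ℤ) (hM : M = max |A| |B|)
    (N : ℕ) (hN : d + 1 ≤ N)
    (x : Fin N → ℤ) (hinj : Function.Injective x) (hx : ∀ i, x i ∈ Set.Icc A B)
    (v : InfinitePlace L) :
    Real.log (max 1 (polyNorm (⇑v) F)) ≤
      (d : ℝ) * Real.log (2 * (M : ℝ)) + Real.log ((d : ℝ) + 1)
      + (1 / ((N : ℝ) - (d : ℝ))) *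
          ∑ i, Real.log (max 1 (v (F.eval ((x i : ℤ) : L)))) := by
  set a : Fin N → ℝ := fun i => Real.log (max 1 (v (F.eval ((x i : ℤ) : L))))
  set t := (1 / ((N : ℝ) - d)) * ∑ i, a i
  have ha : ∀ i, 0 ≤ a i := fun i => Real.log_nonneg (le_max_left _ _)
  have hNd : (0 : ℝ) < N - d := sub_pos.mpr (by exact_mod_cast hN)
  have ht : 0 ≤ t := mul_nonneg (by positivity) (sum_nonneg fun i _ => ha i)
  have hxM : ∀ i, |x i| ≤ M := fun i => hM ▸ abs_le_max_abs_abs (hx i).1 (hx i).2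
  have hM1 : (1 : ℝ) ≤ M := by
    exact_mod_cast Int.one_le_of_ne_of_abs_le
      (hinj.ne (show (⟨0, by omega⟩ : Fin N) ≠ ⟨1, by omega⟩ by simp))
      (hxM _) (hxM _)
  obtain ⟨S, hSgood, hScard⟩ := exists_subset_card_eq
    (lt_card_filter_le_of_sum_le ha (t := t) (by simpa using hN) (by simp [t, field]))
  have hcoeff : ∀ i, v (F.coeff i) ≤ (d + 1) * (2 * M) ^ d * Real.exp t := by
    have hdegS : F.degree < #S := hScard ▸ (degree_le_natDegree.trans_lt
      (by exact_mod_cast Nat.lt_succ_of_le hdeg))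
    simpa [hScard] using v.coeff_le_of_eval_intCast_le hinj.injOn hdegS (fun k _ => hxM k)
      fun j hj => (le_max_right _ _).trans <| (Real.le_exp_log _).trans <|
        Real.exp_le_exp.mpr (mem_filter.mp (hSgood hj)).2
  have hC : 1 ≤ (d + 1) * (2 * (M : ℝ)) ^ d * Real.exp t :=
    one_le_mul_of_one_le_of_one_le (one_le_mul_of_one_le_of_one_le (by simp)
      (one_le_pow₀ (by linarith))) (Real.one_le_exp ht)
  calc Real.log (max 1 (polyNorm (⇑v) F))
      ≤ Real.log ((d + 1) * (2 * M) ^ d * Real.exp t) :=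
        Real.log_le_log (by positivity) (max_le hC (Real.iSup_le hcoeff (by linarith)))
    _ = d * Real.log (2 * M) + Real.log (d + 1) + t := by
        rw [Real.log_mul (by positivity) (by positivity), Real.log_mul (by positivity)
          (by positivity), Real.log_pow, Real.log_exp]
        ring

/-- Let `F ∈ L[X]` of degree at most `d ≥ 1`, `N ≥ d+1`, and let
`x 0, …, x (N-1)` be distinct integers in `[A, B]`, `D = B − A`, `M = max{|A|, |B|}`. Then for
every infinite place `v` of `L`,
`log max{1, |F|_v} ≤ d·log(2M) + log(d+1) + (1/(N−d)) Σ_i log max{1, |F(x_i)|_v}`. -/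
theorem stmt_5 {L : Type*} [Field L] [NumberField L]
    (d : ℕ) (hd : 1 ≤ d) (F : L[X]) (hdeg : F.natDegree ≤ d)
    (A B : ℤ) (hAB : A ≤ B) (D : ℕ) (hD : (D : ℤ) = B - A) (M : ℤ) (hM : M = max |A| |B|)
    (N : ℕ) (hN : d + 1 ≤ N)
    (x : Fin N → ℤ) (hinj : Function.Injective x) (hx : ∀ i, x i ∈ Set.Icc A B)
    (v : InfinitePlace L) :
    Real.log (max 1 (polyNorm (⇑v) F)) ≤
      (d : ℝ) * Real.log (2 * (M : ℝ)) + Real.log ((d : ℝ) + 1)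
      + (1 / ((N : ℝ) - (d : ℝ))) *
          ∑ i, Real.log (max 1 (v (F.eval ((x i : ℤ) : L)))) :=
  stmt_5_general d hd F hdeg A B M hM N hN x hinj hx v
end

section
/- Let F ∈ L[X] be a polynomial of degree at most d ≥ 1, let A ≤ B be integers with M = max{|A|, |B|}, and let v be an infinite place of L. Then the number of integers x ∈ [A, B] satisfying |F(x)|_v < |F|_v / ((2M)^d · (d+1)) is at most d. -/
open NumberField Polynomial IsDedekindDomain Nat
open scoped Classical

/-!
If `d + 1` integers `x₀, …, x_d ∈ [A, B]` satisfied the inequality, Lagrange interpolation would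
give `F = ∑ F(xᵢ) ℓᵢ` with `ℓᵢ = ∏_{j ≠ i} (X - xⱼ) / (xᵢ - xⱼ)`. Since the nodes are distinct
integers, `|ℓᵢ|_v ≤ ∏_{j ≠ i} (1 + |xⱼ|) / |xᵢ - xⱼ| ≤ (2M)^d`, hence
`|F|_v ≤ (2M)^d ∑ |F(xᵢ)|_v < |F|_v`.
-/

section PolyNorm

variable {L : Type*} [Field L] (v : AbsoluteValue L ℝ)

lemma bddAbove_range_coeff (P : L[X]) : BddAbove (Set.range fun i => v (P.coeff i)) := by
  refine ⟨∑ i ∈ P.support, v (P.coeff i), ?_⟩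
  rintro _ ⟨i, rfl⟩
  by_cases hi : i ∈ P.support
  · exact Finset.single_le_sum (f := fun i => v (P.coeff i)) (fun _ _ => v.nonneg _) hi
  · simp [notMem_support_iff.mp hi, Finset.sum_nonneg]

lemma coeff_le_polyNorm (P : L[X]) (i : ℕ) : v (P.coeff i) ≤ polyNorm v P :=
  le_ciSup (bddAbove_range_coeff v P) i

lemma polyNorm_nonneg (P : L[X]) : 0 ≤ polyNorm v P :=
  (v.nonneg _).trans (coeff_le_polyNorm v P 0)

lemma polyNorm_le {P : L[X]} {c : ℝ} (h : ∀ i, v (P.coeff i) ≤ c) : polyNorm v P ≤ c :=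
  ciSup_le h

lemma polyNorm_one_le : polyNorm v (1 : L[X]) ≤ 1 :=
  polyNorm_le v fun i => by
    rcases eq_or_ne i 0 with rfl | hi
    · simp
    · simp [coeff_one, hi]

lemma polyNorm_C_mul_le (a : L) (P : L[X]) : polyNorm v (C a * P) ≤ v a * polyNorm v P :=
  polyNorm_le v fun i => by
    rw [coeff_C_mul, v.map_mul]
    exact mul_le_mul_of_nonneg_left (coeff_le_polyNorm v P i) (v.nonneg a)

lemma polyNorm_sum_le {ι : Type*} (s : Finset ι) (P : ι → L[X]) :
    polyNorm v (∑ i ∈ s, P i) ≤ ∑ i ∈ s, polyNorm v (P i) :=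
  polyNorm_le v fun k => by
    rw [finsetSum_coeff]
    exact (v.sum_le _ _).trans (Finset.sum_le_sum fun i _ => coeff_le_polyNorm v (P i) k)

lemma polyNorm_mul_X_sub_C_le (P : L[X]) (c : L) :
    polyNorm v (P * (X - C c)) ≤ (1 + v c) * polyNorm v P := by
  have hcoeff (k : ℕ) : (P * (X - C c)).coeff k = (P * X).coeff k - c * P.coeff k := by
    rw [mul_sub, coeff_sub, coeff_mul_C, mul_comm (P.coeff k)]
  have hc := v.nonneg c
  have hP := polyNorm_nonneg v P
  refine polyNorm_le v fun k => ?_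
  rw [hcoeff]
  cases k with
  | zero =>
    rw [coeff_mul_X_zero, zero_sub, v.map_neg, v.map_mul]
    nlinarith [coeff_le_polyNorm v P 0]
  | succ k =>
    rw [coeff_mul_X]
    calc v (P.coeff k - c * P.coeff (k + 1))
        ≤ v (P.coeff k) + v c * v (P.coeff (k + 1)) := v.map_mul c _ ▸ v.sub_le_add _ _
      _ ≤ (1 + v c) * polyNorm v P := by
        nlinarith [coeff_le_polyNorm v P k, coeff_le_polyNorm v P (k + 1)]

lemma polyNorm_prod_X_sub_C_le {ι : Type*} (s : Finset ι) (f : ι → L) :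
    polyNorm v (∏ j ∈ s, (X - C (f j))) ≤ ∏ j ∈ s, (1 + v (f j)) := by
  classical
  induction s using Finset.induction with
  | empty => simpa using polyNorm_one_le v
  | insert a s ha ih =>
    rw [Finset.prod_insert ha, Finset.prod_insert ha, mul_comm (X - C (f a))]
    exact (polyNorm_mul_X_sub_C_le v _ _).trans
      (mul_le_mul_of_nonneg_left ih (by linarith [v.nonneg (f a)]))

lemma polyNorm_lagrangeBasis_le {ι : Type*} [DecidableEq ι] (s : Finset ι) (f : ι → L) (i : ι) :
    polyNorm v (Lagrange.basis s f i) ≤ ∏ j ∈ s.erase i, (1 + v (f j)) / v (f i - f j) := by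
  have hbasis : Lagrange.basis s f i =
      C (∏ j ∈ s.erase i, (f i - f j)⁻¹) * ∏ j ∈ s.erase i, (X - C (f j)) := by
    simp only [Lagrange.basis, Lagrange.basisDivisor, Finset.prod_mul_distrib, map_prod]
  rw [hbasis, Finset.prod_div_distrib, div_eq_inv_mul, ← Finset.prod_inv_distrib]
  refine (polyNorm_C_mul_le v _ _).trans ?_
  rw [map_prod]
  simp only [map_inv₀]
  exact mul_le_mul_of_nonneg_left (polyNorm_prod_X_sub_C_le v _ _)
    (Finset.prod_nonneg fun j _ => inv_nonneg.mpr (v.nonneg _))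

lemma polyNorm_le_sum_of_degree_lt {ι : Type*} [DecidableEq ι] {s : Finset ι} {f : ι → L}
    (hf : Set.InjOn f s) {P : L[X]} (hP : P.degree < s.card) :
    polyNorm v P ≤ ∑ i ∈ s, v (P.eval (f i)) * polyNorm v (Lagrange.basis s f i) := by
  conv_lhs => rw [Lagrange.eq_interpolate hf hP, Lagrange.interpolate_apply]
  exact (polyNorm_sum_le v _ _).trans (Finset.sum_le_sum fun i _ => polyNorm_C_mul_le v _ _)

end PolyNorm

namespace NumberField.InfinitePlace

variable {L : Type*} [Field L] (w : InfinitePlace L)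

lemma one_add_div_sub_le_of_abs_le {i j M : ℤ} (hij : i ≠ j) (hi : |i| ≤ M) (hj : |j| ≤ M) :
    (1 + w (j : L)) / w ((i : L) - j) ≤ 2 * (M : ℝ) := by
  have hM : 1 ≤ M := by
    rcases eq_or_ne j 0 with rfl | hj0
    · exact (Int.one_le_abs hij).trans hi
    · exact (Int.one_le_abs hj0).trans hj
  have hdist : (1 : ℝ) ≤ |((i - j : ℤ) : ℝ)| := by
    exact_mod_cast Int.one_le_abs (sub_ne_zero.mpr hij)
  rw [← Int.cast_sub, w.map_intCast, w.map_intCast, Int.norm_eq_abs, Int.norm_eq_abs]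
  calc (1 + |(j : ℝ)|) / |((i - j : ℤ) : ℝ)| ≤ 1 + |(j : ℝ)| :=
        div_le_self (by positivity) hdist
    _ ≤ 2 * (M : ℝ) := by
      rw [← Int.cast_abs]
      have : ((|j| : ℤ) : ℝ) ≤ M := by exact_mod_cast hj
      have : (1 : ℝ) ≤ M := by exact_mod_cast hM
      linarith

lemma polyNorm_le_pow_mul_sum_eval [CharZero L] {t : Finset ℤ} {M : ℤ} (ht : ∀ x ∈ t, |x| ≤ M)
    {P : L[X]} (hP : P.natDegree < t.card) :
    polyNorm w P ≤ (2 * (M : ℝ)) ^ (t.card - 1) * ∑ x ∈ t, w (P.eval (x : L)) := by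
  have hinj : Set.InjOn (fun x : ℤ => (x : L)) t := Int.cast_injective.injOn
  have hdeg : P.degree < t.card := degree_le_natDegree.trans_lt (by exact_mod_cast hP)
  refine (polyNorm_le_sum_of_degree_lt w.1 hinj hdeg).trans ?_
  rw [Finset.mul_sum]
  refine Finset.sum_le_sum fun i hi => ?_
  rw [mul_comm]
  refine mul_le_mul_of_nonneg_right ?_ (apply_nonneg w _)
  calc polyNorm w (Lagrange.basis t (fun x : ℤ => (x : L)) i)
      ≤ ∏ j ∈ t.erase i, (1 + w (j : L)) / w ((i : L) - j) := polyNorm_lagrangeBasis_le w.1 _ _ _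
    _ ≤ ∏ _j ∈ t.erase i, 2 * (M : ℝ) :=
      Finset.prod_le_prod (fun _ _ => by positivity) fun j hj =>
        w.one_add_div_sub_le_of_abs_le (Finset.ne_of_mem_erase hj).symm (ht i hi)
          (ht j (Finset.mem_of_mem_erase hj))
    _ = (2 * (M : ℝ)) ^ (t.card - 1) := by
      rw [Finset.prod_const, Finset.card_erase_of_mem hi]

end NumberField.InfinitePlace

theorem stmt_7_general {L : Type*} [Field L] [NumberField L]
    (d : ℕ) (F : L[X]) (hdeg : F.natDegree ≤ d)
    (A B : ℤ) (M : ℤ) (hM : M = max |A| |B|)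
    (v : InfinitePlace L) :
    {x : ℤ | x ∈ Set.Icc A B ∧
        v (F.eval ((x : ℤ) : L)) <
          polyNorm (⇑v) F / ((2 * (M : ℝ)) ^ d * ((d : ℝ) + 1))}.ncard ≤ d := by
  set N := polyNorm v F
  set c := (2 * (M : ℝ)) ^ d
  by_contra! hcard
  obtain ⟨t, htS, htcard⟩ := Set.exists_subset_card_eq hcard
  obtain ⟨t, rfl⟩ := (Set.finite_of_ncard_pos (by omega : 0 < t.ncard)).exists_finset_coe
  rw [Set.ncard_coe_finset] at htcard
  have hmem := fun x (hx : x ∈ t) => htS hx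
  have hbound : ∀ x ∈ t, |x| ≤ M := fun x hx =>
    hM ▸ abs_le_max_abs_abs (hmem x hx).1.1 (hmem x hx).1.2
  obtain ⟨x₀, hx₀⟩ : t.Nonempty := Finset.card_pos.mp (by omega)
  -- for `M = 0` the threshold is the junk value `N / 0 = 0`, which no `v (F.eval x)` lies below
  have hden : 0 < c * ((d : ℝ) + 1) := by
    have := (apply_nonneg v _).trans_lt (hmem x₀ hx₀).2
    rcases div_pos_iff.mp this with h | h
    · exact h.2
    · exact absurd h.1 (polyNorm_nonneg v.1 F).not_gt
  have hc : 0 < c := pos_of_mul_pos_left hden (by positivity)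
  have key : N < N := calc
    N ≤ c * ∑ x ∈ t, v (F.eval (x : L)) := by
      simpa [htcard] using v.polyNorm_le_pow_mul_sum_eval hbound (P := F) (by omega)
    _ < c * ∑ _x ∈ t, N / (c * ((d : ℝ) + 1)) :=
      mul_lt_mul_of_pos_left (Finset.sum_lt_sum_of_nonempty ⟨x₀, hx₀⟩ fun x hx => (hmem x hx).2) hc
    _ = N := by
      rw [Finset.sum_const, htcard, nsmul_eq_mul]
      field_simp
      push_cast
      ring
  exact lt_irrefl N key

/-- Let `F ∈ L[X]` of degree at most `d ≥ 1`, let `A ≤ B` be integers with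
`M = max{|A|, |B|}`, and let `v` be an infinite place of `L`. Then the number of integers
`x ∈ [A, B]` with `|F(x)|_v < |F|_v / ((2M)^d · (d+1))` is at most `d`. -/
theorem stmt_7 {L : Type*} [Field L] [NumberField L]
    (d : ℕ) (hd : 1 ≤ d) (F : L[X]) (hdeg : F.natDegree ≤ d)
    (A B : ℤ) (hAB : A ≤ B) (M : ℤ) (hM : M = max |A| |B|)
    (v : InfinitePlace L) :
    {x : ℤ | x ∈ Set.Icc A B ∧
        v (F.eval ((x : ℤ) : L)) <
          polyNorm (⇑v) F / ((2 * (M : ℝ)) ^ d * ((d : ℝ) + 1))}.ncard ≤ d :=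
  stmt_7_general d F hdeg A B M hM v
end

section
/- Let L be a number field of degree d_L over ℚ, let (ε_i)_{i∈I} be a fundamental system of units of Z_L, and set C = 2·d_L·max_{i∈I} h(ε_i) (with C = 0 if the unit rank is zero). Then every nonzero principal ideal 𝔞 of Z_L admits a generator a ∈ Z_L such that h(a) ≤ max{C, h°(𝔞)}. -/
open NumberField Polynomial IsDedekindDomain Nat
open scoped Classical

/-!
Let `α` generate `𝔞` and write `ℓ(x) = (m_w log |x|_w)_w` over the infinite places. The vector
`ℓ(α) - (log N𝔞 / d_L) (m_w)_w` has coordinate sum zero, so by Dirichlet's unit theorem it is a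
real combination `∑ c_i ℓ(ε_i)`. Each `ℓ(ε_i)` has `ℓ¹`-norm `2 d_L h(ε_i) ≤ C`, so Beck–Fiala
rounding of the `c_i` to integers `u_i` produces a unit `η = ∏ ε_i ^ (-u_i)` such that every
coordinate of `ℓ(αη)` lies within `C` of `m_w log N𝔞 / d_L`. As `a = αη` is integral,
`d_L h(a) = ∑_w max(0, ℓ_w(a))`, and this coordinatewise bound together with
`∑_w ℓ_w(a) = log N𝔞` gives `h(a) ≤ max(C, h°(𝔞))`.
-/

section Discrepancy

open Finset

variable {ι W : Type*}

noncomputable def fractionalSupport [Fintype ι] (θ : ι → ℝ) : Finset ι :=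
  univ.filter fun i => θ i ≠ 0 ∧ θ i ≠ 1

theorem mem_fractionalSupport [Fintype ι] {θ : ι → ℝ} {i : ι} :
    i ∈ fractionalSupport θ ↔ θ i ≠ 0 ∧ θ i ≠ 1 := by
  simp [fractionalSupport]

theorem abs_sum_sub_mul_le_sum_abs [Fintype ι] (a : ι → ℝ) {θ u : ι → ℝ} {A : Finset ι}
    (hθ : ∀ i, θ i ∈ Set.Icc (0 : ℝ) 1) (hu : ∀ i, u i ∈ Set.Icc (0 : ℝ) 1)
    (hA : ∀ i ∉ A, u i = θ i) :
    |∑ i, (θ i - u i) * a i| ≤ ∑ i ∈ A, |a i| := by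
  rw [← sum_subset (subset_univ A) fun i _ hi => by rw [hA i hi, sub_self, zero_mul]]
  refine (abs_sum_le_sum_abs _ _).trans (sum_le_sum fun i _ => ?_)
  rw [abs_mul]
  exact mul_le_of_le_one_left (abs_nonneg _) (Real.dist_le_of_mem_Icc_01 (hθ i) (hu i))

theorem card_filter_lt_sum_abs_lt_card [Fintype W] (a : ι → W → ℝ) {t : ℝ}
    (ht : ∀ i, ∑ w, |a i w| ≤ t) {A : Finset ι} (hA : A.Nonempty) :
    (univ.filter fun w => t < ∑ i ∈ A, |a i w|).card < A.card := by
  set D := univ.filter fun w => t < ∑ i ∈ A, |a i w|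
  obtain ⟨i₀, -⟩ := id hA
  have ht0 : 0 ≤ t := (sum_nonneg fun w _ => abs_nonneg (a i₀ w)).trans (ht i₀)
  by_contra! hAD
  have hD : D.Nonempty := Finset.card_pos.1 (hA.card_pos.trans_le hAD)
  have : (D.card : ℝ) * t < A.card * t :=
    calc (D.card : ℝ) * t = ∑ w ∈ D, t := by rw [sum_const, nsmul_eq_mul]
      _ < ∑ w ∈ D, ∑ i ∈ A, |a i w| := sum_lt_sum_of_nonempty hD fun w hw => (mem_filter.1 hw).2
      _ ≤ ∑ w, ∑ i ∈ A, |a i w| := sum_le_sum_of_subset_of_nonneg (subset_univ D)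
          fun w _ _ => sum_nonneg fun _ _ => abs_nonneg _
      _ = ∑ i ∈ A, ∑ w, |a i w| := sum_comm
      _ ≤ ∑ i ∈ A, t := sum_le_sum fun i _ => ht i
      _ = A.card * t := by rw [sum_const, nsmul_eq_mul]
  exact (this.trans_le (by gcongr)).false

theorem exists_ne_zero_sum_mul_eq_zero [Fintype ι] (a : ι → W → ℝ) {A : Finset ι}
    {D : Finset W} (hDA : D.card < A.card) :
    ∃ ξ : ι → ℝ, ξ ≠ 0 ∧ (∀ i ∉ A, ξ i = 0) ∧ ∀ w ∈ D, ∑ i, ξ i * a i w = 0 := by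
  have hdep : ¬LinearIndependent ℝ fun (i : A) (w : D) => a i w := fun hli => by
    have := hli.fintype_card_le_finrank
    rw [Module.finrank_fintype_fun_eq_card, Fintype.card_coe, Fintype.card_coe] at this
    omega
  obtain ⟨g, hg, i₀, hi₀⟩ := Fintype.not_linearIndependent_iff.1 hdep
  refine ⟨fun i => if h : i ∈ A then g ⟨i, h⟩ else 0, fun h => hi₀ ?_, fun i hi => dif_neg hi,
    fun w hw => ?_⟩
  · simpa using congrFun h i₀
  · rw [← sum_subset (subset_univ A) fun i _ hi => by simp [hi], ← sum_coe_sort A]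
    simpa using congrFun hg ⟨w, hw⟩

theorem exists_hitting_time_zero_or_one {θ ξ : ℝ} (hθ : θ ∈ Set.Icc (0 : ℝ) 1) (hξ : ξ ≠ 0) :
    ∃ b, 0 ≤ b ∧ (∀ τ ∈ Set.Icc 0 b, θ + τ * ξ ∈ Set.Icc (0 : ℝ) 1) ∧
      (θ + b * ξ = 0 ∨ θ + b * ξ = 1) := by
  obtain ⟨hθ0, hθ1⟩ := hθ
  rcases hξ.lt_or_gt with hξ | hξ
  · refine ⟨θ / -ξ, div_nonneg hθ0 (by linarith), fun τ ⟨hτ0, hτb⟩ => ?_, Or.inl ?_⟩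
    · rw [le_div_iff₀ (by linarith)] at hτb
      constructor <;> nlinarith
    · field_simp; ring
  · refine ⟨(1 - θ) / ξ, div_nonneg (by linarith) hξ.le, fun τ ⟨hτ0, hτb⟩ => ?_, Or.inr ?_⟩
    · rw [le_div_iff₀ hξ] at hτb
      constructor <;> nlinarith
    · field_simp; ring

theorem exists_add_mul_mem_Icc_eq_zero_or_one [Fintype ι] {θ ξ : ι → ℝ}
    (hθ : ∀ i, θ i ∈ Set.Icc (0 : ℝ) 1) (hξ : ξ ≠ 0) :
    ∃ τ : ℝ, (∀ i, θ i + τ * ξ i ∈ Set.Icc (0 : ℝ) 1) ∧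
      ∃ j, ξ j ≠ 0 ∧ (θ j + τ * ξ j = 0 ∨ θ j + τ * ξ j = 1) := by
  choose b hb0 hbIcc hb using fun i : {i // ξ i ≠ 0} => exists_hitting_time_zero_or_one (hθ i) i.2
  obtain ⟨i₀, hi₀⟩ := Function.ne_iff.1 hξ
  obtain ⟨j, -, hj⟩ := exists_min_image univ b ⟨⟨i₀, hi₀⟩, mem_univ _⟩
  refine ⟨b j, fun i => ?_, j, j.2, hb j⟩
  by_cases hi : ξ i = 0
  · simpa [hi] using hθ i
  · exact hbIcc ⟨i, hi⟩ _ ⟨hb0 j, hj _ (mem_univ _)⟩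

/- Beck–Fiala rounding: move `θ` inside the kernel of the rows that are still heavy until one
more coordinate reaches `0` or `1`. A row that is light, i.e. of weight `≤ t` on the coordinates
not yet rounded, keeps an error at most its weight whatever happens afterwards. -/
theorem exists_zero_one_abs_sum_sub_mul_le [Fintype ι] [Fintype W] (a : ι → W → ℝ) {t : ℝ}
    (ht0 : 0 ≤ t) (ht : ∀ i, ∑ w, |a i w| ≤ t) (θ : ι → ℝ)
    (hθ : ∀ i, θ i ∈ Set.Icc (0 : ℝ) 1) :
    ∃ u : ι → ℝ, (∀ i, u i = 0 ∨ u i = 1) ∧ (∀ i ∉ fractionalSupport θ, u i = θ i) ∧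
      ∀ w, |∑ i, (θ i - u i) * a i w| ≤ t := by
  induction hn : (fractionalSupport θ).card using Nat.strong_induction_on generalizing θ with
  | _ n ih =>
  set A := fractionalSupport θ
  have hθA : ∀ i ∉ A, θ i = 0 ∨ θ i = 1 := fun i hi => by
    rw [mem_fractionalSupport] at hi
    tauto
  rcases A.eq_empty_or_nonempty with hA | hA
  · exact ⟨θ, fun i => hθA i (by simp [hA]), fun _ _ => rfl, fun w => by simpa using ht0⟩
  set D := univ.filter fun w => t < ∑ i ∈ A, |a i w|
  obtain ⟨ξ, hξ, hξA, hξD⟩ :=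
    exists_ne_zero_sum_mul_eq_zero a (card_filter_lt_sum_abs_lt_card a ht hA)
  obtain ⟨τ, hθ', j, hξj, hj⟩ := exists_add_mul_mem_Icc_eq_zero_or_one hθ hξ
  set θ' := fun i => θ i + τ * ξ i
  have hθ'A : ∀ i ∉ A, θ' i = θ i := fun i hi => by simp [θ', hξA i hi]
  have hA' : fractionalSupport θ' ⊂ A := by
    refine (ssubset_iff_of_subset fun i hi => ?_).2 ⟨j, ?_, ?_⟩
    · by_contra hiA
      rw [mem_fractionalSupport, hθ'A i hiA] at hi
      exact (hθA i hiA).elim hi.1 hi.2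
    · by_contra hjA
      exact hξj (hξA j hjA)
    · rw [mem_fractionalSupport]
      tauto
  obtain ⟨u, hu01, huθ', hu⟩ := ih _ (hn ▸ card_lt_card hA') θ' hθ' rfl
  have huθ : ∀ i ∉ A, u i = θ i := fun i hi =>
    (huθ' i fun h => hi (hA'.subset h)).trans (hθ'A i hi)
  refine ⟨u, hu01, huθ, fun w => ?_⟩
  by_cases hw : w ∈ D
  · have hshift : ∑ i, (θ i - u i) * a i w = ∑ i, (θ' i - u i) * a i w := by
      have h0 := hξD w hw
      simp only [θ', add_sub_right_comm, add_mul, sum_add_distrib, mul_assoc, ← mul_sum, h0,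
        mul_zero, add_zero]
    exact hshift ▸ hu w
  · have hu' : ∀ i, u i ∈ Set.Icc (0 : ℝ) 1 := fun i => by
      rcases hu01 i with h | h <;> simp [h]
    exact (abs_sum_sub_mul_le_sum_abs _ hθ hu' huθ).trans (by simpa [D] using hw)

theorem exists_int_abs_sum_sub_mul_le [Fintype ι] [Fintype W] (a : ι → W → ℝ) {t : ℝ}
    (ht0 : 0 ≤ t) (ht : ∀ i, ∑ w, |a i w| ≤ t) (x : ι → ℝ) :
    ∃ u : ι → ℤ, ∀ w, |∑ i, (x i - u i) * a i w| ≤ t := by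
  obtain ⟨u, hu01, -, hu⟩ := exists_zero_one_abs_sum_sub_mul_le a ht0 ht
    (fun i => Int.fract (x i)) fun i => ⟨Int.fract_nonneg _, (Int.fract_lt_one _).le⟩
  have hcast : ∀ i, ((⌊u i⌋ : ℤ) : ℝ) = u i := fun i => by
    rcases hu01 i with h | h <;> simp [h]
  refine ⟨fun i => ⌊x i⌋ + ⌊u i⌋, fun w => ?_⟩
  convert hu w using 4 with i
  push_cast [hcast, Int.fract]
  ring

end Discrepancy

theorem eq_of_sum_eq_of_forall_ne {α M : Type*} [Fintype α] [AddCommGroup M] {f g : α → M}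
    (a₀ : α) (hsum : ∑ a, f a = ∑ a, g a) (h : ∀ a, a ≠ a₀ → f a = g a) : f = g := by
  funext a
  by_cases ha : a = a₀
  · subst ha
    rw [Fintype.sum_eq_add_sum_compl a, Fintype.sum_eq_add_sum_compl a,
      Finset.sum_congr rfl fun b hb => h b (Finset.mem_compl.1 hb ∘ Finset.mem_singleton.2)]
      at hsum
    exact add_right_cancel hsum
  · exact h a ha

theorem sum_max_zero_le_sum_mul_max {W : Type*} [Fintype W] {m y : W → ℝ} {s t : ℝ}
    (hm : ∀ w, 1 ≤ m w) (hs : 0 ≤ s) (hy : ∀ w, |y w - m w * s| ≤ t)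
    (hsum : ∑ w, y w = (∑ w, m w) * s) :
    ∑ w, max 0 (y w) ≤ (∑ w, m w) * max t s := by
  have key : ∀ w, max 0 (y w) ≤ y w + m w * max 0 (t - s) := fun w => by
    have hyw := (abs_le.1 (hy w)).1
    have hmw := hm w
    rcases le_total s t with h | h
    · rw [max_eq_right (sub_nonneg.2 h)]
      exact max_le (by nlinarith) (by nlinarith)
    · rw [max_eq_left (sub_nonpos.2 h)]
      exact max_le (by nlinarith) (by rw [mul_zero, add_zero])
  calc ∑ w, max 0 (y w) ≤ ∑ w, (y w + m w * max 0 (t - s)) := Finset.sum_le_sum fun w _ => key w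
    _ = (∑ w, m w) * (s + max 0 (t - s)) := by
        rw [Finset.sum_add_distrib, hsum, ← Finset.sum_mul]; ring
    _ = (∑ w, m w) * max t s := by
        rw [add_comm, max_add, zero_add, sub_add_cancel, max_comm]

section LogEmbedding

open Finset

variable {L : Type*} [Field L]

/-- `Units.logEmbedding` with the component at `w₀` kept. -/
noncomputable def fullLogEmbedding (x : L) (w : InfinitePlace L) : ℝ :=
  w.mult * Real.log (w x)

theorem fullLogEmbedding_mul {x y : L} (hx : x ≠ 0) (hy : y ≠ 0) :
    fullLogEmbedding (x * y) = fullLogEmbedding x + fullLogEmbedding y := by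
  ext w
  simp [fullLogEmbedding, Real.log_mul, hx, hy, mul_add]

theorem fullLogEmbedding_prod_zpow {ι : Type*} [Fintype ι] {x : ι → L} (hx : ∀ i, x i ≠ 0)
    (e : ι → ℤ) :
    fullLogEmbedding (∏ i, x i ^ e i) = ∑ i, (e i : ℝ) • fullLogEmbedding (x i) := by
  ext w
  have hw : ∀ i, w (x i) ^ e i ≠ 0 := fun i => zpow_ne_zero _ ((map_ne_zero w).2 (hx i))
  simp only [fullLogEmbedding, map_prod, map_zpow₀, Real.log_prod fun i _ => hw i, Real.log_zpow,
    mul_sum, Finset.sum_apply, Pi.smul_apply, smul_eq_mul]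
  exact sum_congr rfl fun i _ => by ring

theorem NumberField.Units.coe_prod_zpow {ι : Type*} [Fintype ι] (ε : ι → (𝓞 L)ˣ) (e : ι → ℤ) :
    ((∏ i, ε i ^ e i : (𝓞 L)ˣ) : L) = ∏ i, (ε i : L) ^ e i := by
  change ((Units.coeHom L).comp (Units.map (algebraMap (𝓞 L) L : 𝓞 L →* L))) _ = _
  simp only [map_prod, map_zpow]
  rfl

variable [NumberField L]

theorem sum_fullLogEmbedding (x : L) :
    ∑ w, fullLogEmbedding x w = Real.log |(Algebra.norm ℚ x : ℝ)| := by
  rcases eq_or_ne x 0 with rfl | hx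
  · simp [fullLogEmbedding]
  rw [← Rat.cast_abs, ← InfinitePlace.prod_eq_abs_norm,
    Real.log_prod fun w _ => pow_ne_zero _ ((map_ne_zero w).2 hx)]
  simp [fullLogEmbedding, Real.log_pow]

theorem sum_fullLogEmbedding_coe_eq_log_absNorm (x : 𝓞 L) :
    ∑ w, fullLogEmbedding (x : L) w = Real.log (Ideal.absNorm (Ideal.span {x}) : ℝ) := by
  rw [sum_fullLogEmbedding, Ideal.absNorm_span_singleton, ← Algebra.coe_norm_int]
  push_cast [Nat.cast_natAbs, Int.cast_abs]
  rfl

theorem sum_fullLogEmbedding_unit (u : (𝓞 L)ˣ) : ∑ w, fullLogEmbedding (u : L) w = 0 :=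
  Units.sum_mult_mul_log u

end LogEmbedding

section Height

open Finset

variable {L : Type*} [Field L] [NumberField L]

theorem elemHeight_nonneg (x : L) : 0 ≤ elemHeight x := by
  unfold elemHeight
  refine mul_nonneg (by positivity)
    (add_nonneg (finsum_nonneg fun v => ?_) (sum_nonneg fun w _ => ?_))
  · exact Real.log_nonneg (le_max_left _ _)
  · exact mul_nonneg (by positivity) (Real.log_nonneg (le_max_left _ _))

theorem finAbs_coe_le_one (x : 𝓞 L) (v : HeightOneSpectrum (𝓞 L)) : finAbs v (x : L) ≤ 1 := by
  unfold finAbs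
  split_ifs with hx
  · exact zero_le_one
  have hval : 0 ≤ intValOn v (x : L) := by
    have hne := (v.valuation L).ne_zero_iff.mpr hx
    have h1 : WithZero.unzero hne ≤ 1 := by
      rw [← WithZero.coe_le_coe, WithZero.coe_unzero]
      exact v.valuation_le_one x
    simp only [intValOn, dif_neg hx, Left.nonneg_neg_iff]
    exact h1
  have hN : (1 : ℝ) ≤ Ideal.absNorm v.asIdeal := by
    exact_mod_cast Nat.one_le_iff_ne_zero.2 (Ideal.absNorm_eq_zero_iff.not.2 v.ne_bot)
  exact zpow_le_one_of_nonpos₀ hN (neg_nonpos.2 hval)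

theorem elemHeight_coe (x : 𝓞 L) :
    elemHeight (x : L) =
      (1 / (Module.finrank ℚ L : ℝ)) * ∑ w, max 0 (fullLogEmbedding (x : L) w) := by
  have hfin : ∀ v, Real.log (max 1 (finAbs v (x : L))) = 0 := fun v => by
    rw [max_eq_left (finAbs_coe_le_one x v), Real.log_one]
  simp only [elemHeight, hfin, finsum_zero, zero_add, fullLogEmbedding]
  congr 1
  refine sum_congr rfl fun w _ => ?_
  rw [← Real.posLog_eq_log_max_one (by positivity), Real.posLog_apply,
    mul_max_of_nonneg _ _ (by positivity), mul_zero]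

theorem sum_abs_fullLogEmbedding_unit (u : (𝓞 L)ˣ) :
    ∑ w, |fullLogEmbedding (u : L) w| = 2 * Module.finrank ℚ L * elemHeight (u : L) := by
  have habs : ∀ y : ℝ, |y| = 2 * max 0 y - y := fun y => by
    rcases le_total 0 y with h | h <;> simp [h, abs_of_nonneg, abs_of_nonpos]; ring
  have hd : (Module.finrank ℚ L : ℝ) ≠ 0 := Nat.cast_ne_zero.2 Module.finrank_pos.ne'
  rw [elemHeight_coe (u : 𝓞 L)]
  simp only [habs, sum_sub_distrib, ← mul_sum]
  rw [sum_fullLogEmbedding_unit, sub_zero]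
  field_simp

end Height

section UnitLattice

open Finset Units.dirichletUnitTheorem

variable {L : Type*} [Field L] [NumberField L]

theorem exists_eq_sum_smul_fullLogEmbedding (ε : Fin (Units.rank L) → (𝓞 L)ˣ)
    (hε : ∃ b : @Module.Basis (Fin (NumberField.Units.rank L)) ℤ
        (Additive ((𝓞 L)ˣ ⧸ NumberField.Units.torsion L)) _ _ (AddCommGroup.toIntModule _),
      ∀ i, b i = Additive.ofMul (QuotientGroup.mk (ε i)))
    (z : InfinitePlace L → ℝ) (hz : ∑ w, z w = 0) :
    ∃ c : Fin (Units.rank L) → ℝ, z = ∑ i, c i • fullLogEmbedding (ε i : L) := by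
  obtain ⟨b, hb⟩ := hε
  -- Off `w₀`, expand `z` in the `ℝ`-basis of the log space given by Dirichlet's unit theorem;
  -- at `w₀` both sides are determined by their zero coordinate sum.
  set B := (b.map (Units.logEmbeddingEquiv L)).ofZLatticeBasis ℝ (Units.unitLattice L)
  have hB : ∀ i, B i = Units.logEmbedding L (Additive.ofMul (ε i)) := fun i => by
    simp [B, hb]
  refine ⟨B.repr fun w => z w, eq_of_sum_eq_of_forall_ne w₀ ?_ fun w hw => ?_⟩
  · simp only [Finset.sum_apply, Pi.smul_apply, smul_eq_mul]
    rw [hz, sum_comm]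
    simp [← mul_sum, sum_fullLogEmbedding_unit]
  · have := congrFun (B.sum_repr fun w => z w) ⟨w, hw⟩
    simpa [hB, fullLogEmbedding] using this.symm

theorem exists_unit_abs_fullLogEmbedding_mul_sub_le (ε : Fin (Units.rank L) → (𝓞 L)ˣ)
    (hε : ∃ b : @Module.Basis (Fin (NumberField.Units.rank L)) ℤ
        (Additive ((𝓞 L)ˣ ⧸ NumberField.Units.torsion L)) _ _ (AddCommGroup.toIntModule _),
      ∀ i, b i = Additive.ofMul (QuotientGroup.mk (ε i)))
    {t : ℝ} (ht0 : 0 ≤ t) (ht : ∀ i, ∑ w, |fullLogEmbedding (ε i : L) w| ≤ t)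
    {x : L} (hx : x ≠ 0) (y : InfinitePlace L → ℝ) (hy : ∑ w, y w = ∑ w, fullLogEmbedding x w) :
    ∃ η : (𝓞 L)ˣ, ∀ w, |fullLogEmbedding (x * η) w - y w| ≤ t := by
  obtain ⟨c, hc⟩ := exists_eq_sum_smul_fullLogEmbedding ε hε (fullLogEmbedding x - y)
    (by simp [sum_sub_distrib, hy])
  obtain ⟨u, hu⟩ := exists_int_abs_sum_sub_mul_le (fun i => fullLogEmbedding (ε i : L)) ht0 ht c
  refine ⟨∏ i, ε i ^ (-u i), fun w => ?_⟩
  have hlog : fullLogEmbedding (x * (∏ i, ε i ^ (-u i) : (𝓞 L)ˣ)) w - y w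
      = ∑ i, (c i - u i) * fullLogEmbedding (ε i : L) w := by
    have hcw := congrFun hc w
    rw [Units.coe_prod_zpow, fullLogEmbedding_mul hx (prod_ne_zero_iff.2 fun i _ =>
        zpow_ne_zero _ (Units.coe_ne_zero _)),
      fullLogEmbedding_prod_zpow (fun i => Units.coe_ne_zero _)]
    simp only [Pi.sub_apply, Pi.add_apply, Finset.sum_apply, Pi.smul_apply, smul_eq_mul] at hcw ⊢
    push_cast
    simp only [sub_mul, neg_mul, sum_sub_distrib, sum_neg_distrib, ← hcw]
    ring
  exact hlog ▸ hu w

theorem exists_unit_elemHeight_mul_le (ε : Fin (Units.rank L) → (𝓞 L)ˣ)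
    (hε : ∃ b : @Module.Basis (Fin (NumberField.Units.rank L)) ℤ
        (Additive ((𝓞 L)ˣ ⧸ NumberField.Units.torsion L)) _ _ (AddCommGroup.toIntModule _),
      ∀ i, b i = Additive.ofMul (QuotientGroup.mk (ε i)))
    {t : ℝ} (ht0 : 0 ≤ t) (ht : ∀ i, ∑ w, |fullLogEmbedding (ε i : L) w| ≤ t)
    {x : 𝓞 L} (hx : x ≠ 0) :
    ∃ η : (𝓞 L)ˣ, elemHeight ((x * η : 𝓞 L) : L) ≤
      max t (1 / (Module.finrank ℚ L : ℝ) * Real.log (Ideal.absNorm (Ideal.span {x}) : ℝ)) := by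
  have hx' : (x : L) ≠ 0 := by exact_mod_cast hx
  have hsum_mult : ∑ w : InfinitePlace L, (w.mult : ℝ) = Module.finrank ℚ L := by
    exact_mod_cast InfinitePlace.sum_mult_eq
  set d : ℝ := (Module.finrank ℚ L : ℝ)
  set s := 1 / d * Real.log (Ideal.absNorm (Ideal.span {x}) : ℝ)
  have hd : 0 < d := Nat.cast_pos.2 Module.finrank_pos
  have hs : 0 ≤ s := by
    have : 1 ≤ Ideal.absNorm (Ideal.span {x}) := Nat.one_le_iff_ne_zero.2
      (Ideal.absNorm_eq_zero_iff.not.2 (Ideal.span_singleton_eq_bot.not.2 hx))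
    positivity
  have hsum : ∑ w, fullLogEmbedding (x : L) w = ∑ w : InfinitePlace L, w.mult * s := by
    rw [sum_fullLogEmbedding_coe_eq_log_absNorm, ← sum_mul, hsum_mult]
    simp only [s]
    field_simp
  obtain ⟨η, hη⟩ := exists_unit_abs_fullLogEmbedding_mul_sub_le ε hε ht0 ht hx' _ hsum.symm
  have hsumη : ∑ w, fullLogEmbedding ((x : L) * η) w = ∑ w : InfinitePlace L, w.mult * s := by
    rw [fullLogEmbedding_mul hx' (Units.coe_ne_zero η)]
    simp only [Pi.add_apply, sum_add_distrib]
    rw [sum_fullLogEmbedding_unit, add_zero, hsum]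
  refine ⟨η, ?_⟩
  calc elemHeight ((x * η : 𝓞 L) : L)
      = 1 / d * ∑ w, max 0 (fullLogEmbedding ((x : L) * η) w) := by
        rw [elemHeight_coe]
        rfl
    _ ≤ 1 / d * (d * max t s) := by
        gcongr
        rw [← hsum_mult]
        refine sum_max_zero_le_sum_mul_max (fun w => InfinitePlace.one_le_mult) hs hη ?_
        rw [hsumη, sum_mul]
    _ = max t s := by field_simp

end UnitLattice

/-- Let `(ε_i)` be a fundamental system of units of `Z_L` and
`C = 2·d_L·max_i h(ε_i)` (an empty supremum over `ℝ` is `0`, so `C = 0` if the unit rank is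
zero). Then every nonzero principal ideal `𝔞` of `Z_L` admits a generator `a` with
`h(a) ≤ max{C, h°(𝔞)}`, where `h°(𝔞) = (1/d_L)·log N_{L/ℚ}(𝔞)`. -/
theorem stmt_10 {L : Type*} [Field L] [NumberField L]
    (ε : Fin (NumberField.Units.rank L) → (𝓞 L)ˣ)
    (hε : ∃ b : @Module.Basis (Fin (NumberField.Units.rank L)) ℤ
        (Additive ((𝓞 L)ˣ ⧸ NumberField.Units.torsion L)) _ _ (AddCommGroup.toIntModule _),
      ∀ i, b i = Additive.ofMul (QuotientGroup.mk (ε i)))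
    (C : ℝ) (hC : C = 2 * (Module.finrank ℚ L : ℝ) * ⨆ i, elemHeight ((ε i : 𝓞 L) : L))
    (𝔞 : Ideal (𝓞 L)) (h𝔞 : 𝔞 ≠ ⊥) (hprinc : 𝔞.IsPrincipal) :
    ∃ a : 𝓞 L, 𝔞 = Ideal.span {a} ∧
      elemHeight (a : L) ≤
        max C ((1 / (Module.finrank ℚ L : ℝ)) * Real.log (Ideal.absNorm 𝔞 : ℝ)) := by
  obtain ⟨α, hα : 𝔞 = Ideal.span {α}⟩ := hprinc.principal
  have hα0 : α ≠ 0 := by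
    rintro rfl
    exact h𝔞 (by simpa using hα)
  have hC0 : 0 ≤ C :=
    hC ▸ mul_nonneg (by positivity) (Real.iSup_nonneg fun i => elemHeight_nonneg _)
  have hCε : ∀ i, ∑ w, |fullLogEmbedding (ε i : L) w| ≤ C := fun i => by
    rw [sum_abs_fullLogEmbedding_unit, hC]
    gcongr
    exact le_ciSup (Set.finite_range fun i => elemHeight ((ε i : 𝓞 L) : L)).bddAbove i
  obtain ⟨η, hη⟩ := exists_unit_elemHeight_mul_le ε hε hC0 hCε hα0
  exact ⟨α * η, hα.trans (Ideal.span_singleton_mul_right_unit η.isUnit α).symm, hα ▸ hη⟩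
end

section
/- Let L be a number field of degree d_L over ℚ with ring of integers Z_L, and let R ∈ Z_L be a nonzero non-unit. Then Σ_𝔭 log(N_{L/ℚ}(𝔭))/(p−1) ≤ d_L·(2·log log|N_{L/ℚ}(R)| + 3.5), where the sum is over the prime ideals 𝔭 of Z_L dividing R, and for each such 𝔭, p denotes the rational prime below 𝔭. -/
open NumberField Polynomial IsDedekindDomain Nat
open scoped Classical

/-!
Split the primes `𝔭 ∣ R` at a threshold `M ≈ log |N(R)|` on the rational prime `p` below `𝔭`.
Distinct nonzero primes containing an ideal `I` are pairwise coprime, so their product divides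
`I` and `∑ log N𝔭 ≤ log N(I)`. For `p > M` this bounds the terms by `log |N(R)| / M`; for
`p ≤ M`, taking `I = (p)` bounds the primes above `p` by `d_L · log p / (p - 1)`, leaving
`d_L · ∑_{p ≤ M} log p / (p - 1)`. The primes in `(N, 2N]` divide `C(2N, N) ≤ 4^N`, so this
prime sum grows by at most `log 4` when `M` doubles, whence it is at most `2 log M + log 2`.
-/

noncomputable def mertensSum (M : ℕ) : ℝ :=
  ∑ p ∈ primesLE M, Real.log p / (p - 1)

lemma mertensSum_mono : Monotone mertensSum := fun _ _ h ↦ by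
  refine Finset.sum_le_sum_of_subset_of_nonneg (primesLE_mono h) fun p hp _ ↦ ?_
  have h2 : (2 : ℝ) ≤ p := mod_cast (mem_primesLE.mp hp).2.two_le
  exact div_nonneg (Real.log_nonneg (by linarith)) (by linarith)

lemma mertensSum_one : mertensSum 1 = 0 := by
  simp [mertensSum, primesLE_one]

lemma mertensSum_two : mertensSum 2 = Real.log 2 := by
  rw [mertensSum, show primesLE 2 = {2} by decide]
  norm_num

lemma prod_primesLE_sdiff_le_four_pow (N : ℕ) :
    ∏ p ∈ primesLE (2 * N) \ primesLE N, p ≤ 4 ^ N := by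
  have hsplit := Finset.prod_sdiff (f := fun p ↦ p) (primesLE_mono (by omega : N ≤ 2 * N))
  have h := primorial_add_le (le_refl N)
  rw [← two_mul, ← centralBinom_eq_two_mul_choose, primorial_eq_prod_primesLE,
    primorial_eq_prod_primesLE, ← hsplit, mul_comm] at h
  exact (Nat.le_of_mul_le_mul_left h (primorial_pos N)).trans (centralBinom_le_four_pow N)

lemma mertensSum_two_mul_le {N : ℕ} (hN : 0 < N) :
    mertensSum (2 * N) ≤ mertensSum N + Real.log 4 := by
  set D := primesLE (2 * N) \ primesLE N
  have hpos : (0 : ℝ) < N := mod_cast hN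
  have hD : ∀ p ∈ D, p.Prime ∧ N < p := fun p hp ↦ by
    simp only [D, Finset.mem_sdiff, mem_primesLE] at hp
    exact ⟨hp.1.2, by by_contra! h; exact hp.2 ⟨h, hp.1.2⟩⟩
  have hnew : ∑ p ∈ D, Real.log p / (p - 1) ≤ Real.log 4 := calc
    ∑ p ∈ D, Real.log p / (p - 1) ≤ ∑ p ∈ D, Real.log p / N := by
      refine Finset.sum_le_sum fun p hp ↦ ?_
      have hNp : (N : ℝ) + 1 ≤ p := mod_cast (hD p hp).2
      exact div_le_div_of_nonneg_left (Real.log_natCast_nonneg p) hpos (by linarith)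
    _ = Real.log (∏ p ∈ D, p : ℕ) / N := by
      rw [← Finset.sum_div, Nat.cast_prod,
        Real.log_prod fun p hp ↦ mod_cast (hD p hp).1.ne_zero]
    _ ≤ Real.log (4 ^ N : ℕ) / N := by
      gcongr
      · exact_mod_cast (Finset.prod_pos fun p hp ↦ (hD p hp).1.pos)
      · exact_mod_cast prod_primesLE_sdiff_le_four_pow N
    _ = Real.log 4 := by
      rw [Nat.cast_pow, Real.log_pow, Nat.cast_ofNat, mul_div_cancel_left₀ _ hpos.ne']
  rw [mertensSum, mertensSum, ← Finset.sum_sdiff (primesLE_mono (by omega : N ≤ 2 * N))]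
  linarith

lemma mertensSum_two_pow_le (K : ℕ) : mertensSum (2 ^ (K + 1)) ≤ (2 * K + 1) * Real.log 2 := by
  induction K with
  | zero => simp [mertensSum_two]
  | succ K ih =>
    have hstep := mertensSum_two_mul_le (pow_pos two_pos (K + 1))
    rw [← pow_succ', show (4 : ℝ) = 2 ^ 2 by norm_num, Real.log_pow] at hstep
    push_cast at hstep ⊢
    linarith

lemma mertensSum_le {M : ℕ} (hM : 0 < M) : mertensSum M ≤ 2 * Real.log M + Real.log 2 := by
  set K := Nat.log 2 M
  have hlow : ((2 ^ K : ℕ) : ℝ) ≤ M := mod_cast Nat.pow_log_le_self 2 hM.ne'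
  have hlog : K * Real.log 2 ≤ Real.log M := by
    rw [← Real.log_pow]
    exact Real.log_le_log (by positivity) (by exact_mod_cast hlow)
  calc mertensSum M ≤ mertensSum (2 ^ (K + 1)) :=
        mertensSum_mono (Nat.lt_pow_succ_log_self one_lt_two M).le
    _ ≤ (2 * K + 1) * Real.log 2 := mertensSum_two_pow_le K
    _ ≤ 2 * Real.log M + Real.log 2 := by linarith

lemma exists_mertensSum_add_div_le {u : ℝ} (hu : Real.log 2 ≤ u) :
    ∃ M : ℕ, 0 < M ∧ mertensSum M + u / M ≤ 2 * Real.log u + 3.5 := by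
  have hlog2 := Real.log_two_lt_d9
  have hlog2' := Real.log_two_gt_d9
  rcases le_or_gt 1 u with h1 | h1
  · have hM : 0 < ⌊u⌋₊ := Nat.floor_pos.mpr h1
    have hMu : (⌊u⌋₊ : ℝ) ≤ u := Nat.floor_le (by linarith)
    have hM1 : (1 : ℝ) ≤ ⌊u⌋₊ := mod_cast hM
    have hdiv : u / ⌊u⌋₊ ≤ 2 := by
      rw [div_le_iff₀ (by linarith)]
      linarith [Nat.lt_floor_add_one u]
    have hlogM : Real.log ⌊u⌋₊ ≤ Real.log u := Real.log_le_log (by linarith) hMu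
    refine ⟨⌊u⌋₊, hM, ?_⟩
    linarith [mertensSum_le hM]
  · have hlogu : -1 ≤ Real.log u := by
      have hinv : u⁻¹ ≤ 2 := by
        rw [inv_le_comm₀ (by linarith) two_pos]; linarith
      linarith [Real.one_sub_inv_le_log_of_pos (show 0 < u by linarith)]
    refine ⟨1, one_pos, ?_⟩
    rw [mertensSum_one, Nat.cast_one, div_one]
    linarith

namespace Ideal

variable {S : Type*} [CommRing S] [IsDedekindDomain S]

lemma finite_setOf_isPrime_mem {r : S} (hr : r ≠ 0) : {𝔭 : Ideal S | 𝔭.IsPrime ∧ r ∈ 𝔭}.Finite := by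
  have hspan : span {r} ≠ ⊥ := by simpa [span_singleton_eq_bot] using hr
  have : Finite {J : Ideal S // J ∣ span {r}} :=
    (UniqueFactorizationMonoid.fintypeSubtypeDvd _ hspan).finite
  refine Set.Finite.subset (s := {J | J ∣ span {r}}) (Set.finite_coe_iff.mp this) fun 𝔭 h𝔭 ↦ ?_
  exact dvd_iff_le.mpr ((span_singleton_le_iff_mem 𝔭).mpr h𝔭.2)

variable [Module.Free ℤ S] [Module.Finite ℤ S]

lemma prime_minFac_absNorm_and_mem (P : Ideal S) [P.IsMaximal] :
    (absNorm P).minFac.Prime ∧ ((absNorm P).minFac : S) ∈ P := by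
  obtain ⟨p, n, hn, hpP, hp, hP⟩ := exists_prime_and_absNorm_eq_pow P
  rw [hP, hp.pow_minFac hn.ne']
  exact ⟨hp, hpP⟩

lemma sum_log_absNorm_le {I : Ideal S} (hI : I ≠ ⊥) {F : Finset (Ideal S)}
    (hF : ∀ 𝔭 ∈ F, 𝔭.IsPrime ∧ I ≤ 𝔭) :
    ∑ 𝔭 ∈ F, Real.log (absNorm 𝔭) ≤ Real.log (absNorm I) := by
  have hbot : ∀ 𝔭 ∈ F, 𝔭 ≠ ⊥ := fun 𝔭 h h𝔭 ↦ hI (le_bot_iff.mp (h𝔭 ▸ (hF 𝔭 h).2))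
  have hmax : ∀ 𝔭 ∈ F, 𝔭.IsMaximal := fun 𝔭 h ↦ (hF 𝔭 h).1.isMaximal (hbot 𝔭 h)
  have hdvd : ∏ 𝔭 ∈ F, 𝔭 ∣ I := by
    refine Finset.prod_dvd_of_coprime (fun 𝔭 h𝔭 𝔮 h𝔮 hne ↦ ?_) fun 𝔭 h ↦ dvd_iff_le.mpr (hF 𝔭 h).2
    exact isCoprime_iff_sup_eq.mpr ((hmax 𝔭 h𝔭).coprime_of_ne (hmax 𝔮 h𝔮) hne)
  have hnorm := map_dvd absNorm hdvd
  rw [map_prod] at hnorm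
  have hpos : ∀ J : Ideal S, J ≠ ⊥ → 0 < absNorm J := fun J hJ ↦
    Nat.pos_of_ne_zero (absNorm_eq_zero_iff.not.mpr hJ)
  rw [← Real.log_prod fun 𝔭 h ↦ mod_cast (hpos 𝔭 (hbot 𝔭 h)).ne', ← Nat.cast_prod]
  exact Real.log_le_log (mod_cast Finset.prod_pos fun 𝔭 h ↦ hpos 𝔭 (hbot 𝔭 h))
    (mod_cast Nat.le_of_dvd (hpos I hI) hnorm)

lemma sum_log_absNorm_div_le_of_minFac_le {F : Finset (Ideal S)} (hF : ∀ 𝔭 ∈ F, 𝔭.IsMaximal)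
    {M : ℕ} (hM : ∀ 𝔭 ∈ F, (absNorm 𝔭).minFac ≤ M) :
    ∑ 𝔭 ∈ F, Real.log (absNorm 𝔭) / ((absNorm 𝔭).minFac - 1)
      ≤ Module.finrank ℤ S * mertensSum M := by
  have hmaps : ∀ 𝔭 ∈ F, (absNorm 𝔭).minFac ∈ primesLE M := fun 𝔭 h ↦ by
    have := hF 𝔭 h
    exact mem_primesLE.mpr ⟨hM 𝔭 h, (prime_minFac_absNorm_and_mem 𝔭).1⟩
  rw [← Finset.sum_fiberwise_of_maps_to hmaps, mertensSum, Finset.mul_sum]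
  refine Finset.sum_le_sum fun p hp ↦ ?_
  have hp2 : (2 : ℝ) ≤ p := mod_cast (mem_primesLE.mp hp).2.two_le
  set G := F.filter fun 𝔭 ↦ (absNorm 𝔭).minFac = p
  have hG : ∀ 𝔭 ∈ G, 𝔭.IsPrime ∧ span {(p : S)} ≤ 𝔭 := fun 𝔭 h ↦ by
    obtain ⟨h𝔭F, rfl⟩ := Finset.mem_filter.mp h
    have := hF 𝔭 h𝔭F
    exact ⟨inferInstance, (span_singleton_le_iff_mem 𝔭).mpr (prime_minFac_absNorm_and_mem 𝔭).2⟩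
  have hspan : span {(p : S)} ≠ ⊥ := fun h ↦ by
    have := congrArg absNorm h
    rw [absNorm_span_natCast, absNorm_bot] at this
    exact pow_ne_zero _ (mem_primesLE.mp hp).2.ne_zero this
  have hfiber := sum_log_absNorm_le hspan hG
  rw [absNorm_span_natCast, Nat.cast_pow, Real.log_pow] at hfiber
  calc ∑ 𝔭 ∈ G, Real.log (absNorm 𝔭) / ((absNorm 𝔭).minFac - 1)
        = (∑ 𝔭 ∈ G, Real.log (absNorm 𝔭)) / (p - 1) := by
        rw [Finset.sum_div]
        exact Finset.sum_congr rfl fun 𝔭 h ↦ by rw [(Finset.mem_filter.mp h).2]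
    _ ≤ Module.finrank ℤ S * Real.log p / (p - 1) := by gcongr; linarith
    _ = Module.finrank ℤ S * (Real.log p / (p - 1)) := mul_div_assoc _ _ _

lemma sum_log_absNorm_div_le_of_lt_minFac {I : Ideal S} (hI : I ≠ ⊥) {F : Finset (Ideal S)}
    (hF : ∀ 𝔭 ∈ F, 𝔭.IsPrime ∧ I ≤ 𝔭) {M : ℕ} (hM0 : 0 < M)
    (hM : ∀ 𝔭 ∈ F, M < (absNorm 𝔭).minFac) :
    ∑ 𝔭 ∈ F, Real.log (absNorm 𝔭) / ((absNorm 𝔭).minFac - 1) ≤ Real.log (absNorm I) / M := by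
  have hMpos : (0 : ℝ) < M := mod_cast hM0
  calc ∑ 𝔭 ∈ F, Real.log (absNorm 𝔭) / ((absNorm 𝔭).minFac - 1)
        ≤ ∑ 𝔭 ∈ F, Real.log (absNorm 𝔭) / M := by
        refine Finset.sum_le_sum fun 𝔭 h ↦ ?_
        have : (M : ℝ) + 1 ≤ (absNorm 𝔭).minFac := mod_cast hM 𝔭 h
        exact div_le_div_of_nonneg_left (Real.log_natCast_nonneg _) hMpos (by linarith)
    _ ≤ Real.log (absNorm I) / M := by
      rw [← Finset.sum_div]
      gcongr
      exact sum_log_absNorm_le hI hF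

lemma sum_log_absNorm_div_le {I : Ideal S} (hI : I ≠ ⊥) {F : Finset (Ideal S)}
    (hF : ∀ 𝔭 ∈ F, 𝔭.IsPrime ∧ I ≤ 𝔭) {M : ℕ} (hM : 0 < M) :
    ∑ 𝔭 ∈ F, Real.log (absNorm 𝔭) / ((absNorm 𝔭).minFac - 1)
      ≤ Module.finrank ℤ S * mertensSum M + Real.log (absNorm I) / M := by
  rw [← Finset.sum_filter_add_sum_filter_not F fun 𝔭 ↦ (absNorm 𝔭).minFac ≤ M]
  gcongr
  · refine sum_log_absNorm_div_le_of_minFac_le (fun 𝔭 h ↦ ?_) fun 𝔭 h ↦ (Finset.mem_filter.mp h).2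
    obtain ⟨h𝔭, hI𝔭⟩ := hF 𝔭 (Finset.mem_filter.mp h).1
    exact h𝔭.isMaximal fun hbot ↦ hI (le_bot_iff.mp (hbot ▸ hI𝔭))
  · exact sum_log_absNorm_div_le_of_lt_minFac hI (fun 𝔭 h ↦ hF 𝔭 (Finset.mem_filter.mp h).1) hM
      fun 𝔭 h ↦ not_le.mp (Finset.mem_filter.mp h).2

end Ideal

/-- Here `p`, the rational prime below `𝔭`, is encoded as the smallest prime factor
`(N𝔭).minFac` of the prime power `N𝔭`. -/
theorem stmt_15 {L : Type*} [Field L] [NumberField L]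
    (R : 𝓞 L) (hR : R ≠ 0) (hRu : ¬IsUnit R) :
    (∑ᶠ 𝔭 ∈ {𝔭 : Ideal (𝓞 L) | 𝔭.IsPrime ∧ R ∈ 𝔭},
        Real.log (Ideal.absNorm 𝔭 : ℝ) / (((Ideal.absNorm 𝔭).minFac : ℝ) - 1))
      ≤ (Module.finrank ℚ L : ℝ) *
          (2 * Real.log (Real.log |(Algebra.norm ℤ R : ℝ)|) + 3.5) := by
  have hspan : Ideal.span {R} ≠ ⊥ := by simpa [Ideal.span_singleton_eq_bot] using hR
  have hnorm : (Ideal.absNorm (Ideal.span {R}) : ℝ) = |(Algebra.norm ℤ R : ℝ)| := by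
    rw [Ideal.absNorm_span_singleton, Nat.cast_natAbs, Int.cast_abs]
  have hnorm2 : 2 ≤ Ideal.absNorm (Ideal.span {R}) := by
    have h0 := Ideal.absNorm_eq_zero_iff.not.mpr hspan
    have h1 := Ideal.absNorm_eq_one_iff.not.mpr (mt Ideal.span_singleton_eq_top.mp hRu)
    omega
  set u := Real.log |(Algebra.norm ℤ R : ℝ)|
  have hu : Real.log 2 ≤ u := Real.log_le_log two_pos (hnorm ▸ mod_cast hnorm2)
  obtain ⟨M, hM, hMu⟩ := exists_mertensSum_add_div_le hu
  have hfin := Ideal.finite_setOf_isPrime_mem hR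
  have hsum := Ideal.sum_log_absNorm_div_le hspan (F := hfin.toFinset)
    (fun 𝔭 h ↦ by
      obtain ⟨h𝔭, hR𝔭⟩ := hfin.mem_toFinset.mp h
      exact ⟨h𝔭, (Ideal.span_singleton_le_iff_mem 𝔭).mpr hR𝔭⟩) hM
  rw [RingOfIntegers.rank, hnorm] at hsum
  have hd : (1 : ℝ) ≤ Module.finrank ℚ L := mod_cast Module.finrank_pos
  have hdiv : 0 ≤ u / M := div_nonneg (by linarith [Real.log_pos one_lt_two]) M.cast_nonneg
  rw [← hfin.coe_toFinset, finsum_mem_coe_finset]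
  calc _ ≤ Module.finrank ℚ L * mertensSum M + u / M := hsum
    _ ≤ Module.finrank ℚ L * (mertensSum M + u / M) := by nlinarith
    _ ≤ _ := by gcongr
end
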